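/- arXiv:2003.08938 — 2 statements merged into one kernel-verified Lean document; each statement's English description precedes it below -/
import Mathlib

section
/- There exists a state-adversarial MDP and a stochastic Markovian policy π such that no deterministic Markovian policy π' satisfies Ṽ_{π'∘ν*(π')}(s) ≥ Ṽ_{π∘ν*(π)}(s) for all states s, where ν*(π) denotes an optimal (reward-minimizing) adversary against π. -/
/-!
Let the state never change, and pay reward `1` exactly when the action names the current state.
A deterministic policy `π'` can be fooled: the adversary shows it a state `t`, and at any state
`s ≠ π' t` it then earns nothing forever. The uniform policy ignores its input, so the adversary
is powerless against it and it earns `1/2` at every step, everywhere.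
-/

open Finset

/-- Value function of policy `π` under adversary `ν`: total expected discounted reward,
written via powers of the transition matrix of the merged policy `a ↦ π(a|ν(s))`. -/
noncomputable def advValue {S A : Type*} [Fintype S] [Fintype A] [DecidableEq S]
    (p : S → A → S → ℝ) (R : S → A → S → ℝ) (γ : ℝ)
    (π : S → A → ℝ) (ν : S → S) (s : S) : ℝ :=
  ∑' t : ℕ, γ ^ t *
    (((Matrix.of fun s₁ s₂ => ∑ a, π (ν s₁) a * p s₁ a s₂) ^ t).mulVec
      (fun s₁ => ∑ a, π (ν s₁) a * ∑ s', p s₁ a s' * R s₁ a s')) s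

/-- Value of `π` under the optimal (reward-minimizing) adversary constrained to `B`. -/
noncomputable def advOptValue {S A : Type*} [Fintype S] [Fintype A] [DecidableEq S]
    (p : S → A → S → ℝ) (R : S → A → S → ℝ) (γ : ℝ)
    (B : S → Finset S) (π : S → A → ℝ) (s : S) : ℝ :=
  ⨅ ν : {ν : S → S // ∀ s, ν s ∈ B s}, advValue p R γ π ν.1 s

def selfLoopKernel (S A : Type*) [DecidableEq S] : S → A → S → ℝ :=
  fun s _ s' => if s' = s then 1 else 0

def guessReward (S : Type*) [DecidableEq S] : S → S → S → ℝ :=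
  fun s a _ => if a = s then 1 else 0

section

variable {S A : Type*} [DecidableEq S]

theorem selfLoopKernel_nonneg (s : S) (a : A) (s' : S) : 0 ≤ selfLoopKernel S A s a s' := by
  unfold selfLoopKernel
  split_ifs <;> norm_num

theorem sum_selfLoopKernel [Fintype S] (s : S) (a : A) : ∑ s', selfLoopKernel S A s a s' = 1 := by
  simp [selfLoopKernel]

theorem advValue_selfLoopKernel [Fintype S] [Fintype A] (R : S → A → S → ℝ) {γ : ℝ}
    (hγ₀ : 0 ≤ γ) (hγ₁ : γ < 1)
    {π : S → A → ℝ} (hπ : ∀ s, ∑ a, π s a = 1) (ν : S → S) (s : S) :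
    advValue (selfLoopKernel S A) R γ π ν s = (1 - γ)⁻¹ * ∑ a, π (ν s) a * R s a s := by
  have hM :
      (Matrix.of fun s₁ s₂ => ∑ a, π (ν s₁) a * selfLoopKernel S A s₁ a s₂) = 1 := by
    ext s₁ s₂
    simp [selfLoopKernel, Matrix.one_apply, hπ, eq_comm]
  rw [advValue, hM]
  simp only [one_pow, Matrix.one_mulVec, selfLoopKernel, ite_mul, one_mul, zero_mul,
    Finset.sum_ite_eq', Finset.mem_univ, if_true]
  rw [tsum_mul_right, tsum_geometric_of_lt_one hγ₀ hγ₁]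

theorem advOptValue_le_advValue [Fintype S] [Fintype A] (p R : S → A → S → ℝ) (γ : ℝ)
    (B : S → Finset S) (π : S → A → ℝ) {ν : S → S} (hν : ∀ s, ν s ∈ B s) (s : S) :
    advOptValue p R γ B π s ≤ advValue p R γ π ν s :=
  ciInf_le (Set.finite_range fun ν : {ν : S → S // ∀ s, ν s ∈ B s} =>
    advValue p R γ π ν.1 s).bddBelow ⟨ν, hν⟩

theorem advOptValue_const_policy [Fintype S] [Fintype A] (p R : S → A → S → ℝ) (γ : ℝ)
    {B : S → Finset S} (hB : ∀ s, (B s).Nonempty) (q : A → ℝ) (ν : S → S) (s : S) :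
    advOptValue p R γ B (fun _ => q) s = advValue p R γ (fun _ => q) ν s := by
  have : Nonempty {ν : S → S // ∀ s, ν s ∈ B s} :=
    ⟨⟨fun s => (hB s).choose, fun s => (hB s).choose_spec⟩⟩
  exact ciInf_const

end

/-- There exists an SA-MDP and a stochastic Markovian policy π such that no
deterministic Markovian policy π' is at least as good as π at every state, under
each policy's optimal adversary. -/
theorem exists_stochastic_better_than_all_deterministic :
    ∃ (n m : ℕ) (p : Fin n → Fin m → Fin n → ℝ) (R : Fin n → Fin m → Fin n → ℝ)
      (γ : ℝ) (B : Fin n → Finset (Fin n)) (π : Fin n → Fin m → ℝ),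
      0 < γ ∧ γ < 1 ∧
      (∀ s a s', 0 ≤ p s a s') ∧ (∀ s a, ∑ s', p s a s' = 1) ∧
      (∀ s, (B s).Nonempty) ∧
      (∀ s a, 0 ≤ π s a) ∧ (∀ s, ∑ a, π s a = 1) ∧
      ∀ π' : Fin n → Fin m, ∃ s : Fin n,
        advOptValue p R γ B (fun s a => if a = π' s then (1 : ℝ) else 0) s
          < advOptValue p R γ B π s := by
  refine ⟨2, 2, selfLoopKernel _ _, guessReward _, 1 / 2, fun _ => univ, fun _ _ => 1 / 2,
    by norm_num, by norm_num, selfLoopKernel_nonneg, sum_selfLoopKernel,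
    fun _ => univ_nonempty, fun _ _ => by norm_num, fun _ => by norm_num, fun π' => ?_⟩
  obtain ⟨s, hs⟩ : ∃ s, s ≠ π' 0 := ⟨π' 0 + 1, by simp⟩
  refine ⟨s, ?_⟩
  have fooled : advValue (selfLoopKernel _ _) (guessReward _) (1 / 2)
      (fun s a => if a = π' s then (1 : ℝ) else 0) (fun _ => 0) s = 0 := by
    rw [advValue_selfLoopKernel _ (by norm_num) (by norm_num) (by simp)]
    simp [guessReward, hs]
  have uniform : advOptValue (selfLoopKernel _ _) (guessReward _) (1 / 2) (fun _ => univ)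
      (fun _ _ => 1 / 2) s = 1 := by
    rw [advOptValue_const_policy _ _ _ (fun _ => univ_nonempty) _ id,
      advValue_selfLoopKernel _ (by norm_num) (by norm_num) (by norm_num)]
    norm_num [guessReward]
  calc _ ≤ _ := advOptValue_le_advValue _ _ _ _ _ (fun _ => mem_univ _) s
    _ < _ := by rw [fooled, uniform]; norm_num
end

section
/- Given a finite SA-MDP (S, A, B, R, p, γ) and a fixed policy π, there exists a regular MDP M̂ = (S, Â, R̂, p̂, γ) with action space Â = S such that any optimal deterministic policy of M̂ restricted to actions in B(s) is an optimal adversary ν* for π in the SA-MDP, i.e. Ṽ_{π∘ν*}(s) ≤ Ṽ_{π∘ν}(s) for every state s and every adversary ν with ν(s) ∈ B(s). -/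
/-!
The attacker's MDP has the perturbed observations `ŝ` as actions: it moves with the merged
kernel `∑ₐ π(a|ŝ) p(·|s,a)` and earns the negated expected reward, so on compliant adversaries
(`ν s ∈ B s`) its values are exactly the negated adversarial values. An action outside `B s`
earns a penalty so negative that this single step already costs more than any compliant
adversary can lose over the whole discounted horizon; hence optimal attacker policies are
compliant, and among compliant adversaries they minimize the adversarial value.
-/

open Finset

/-- Value of deterministic policy `ν` in an MDP with transition `ph` and reward `Rh`. -/
noncomputable def detValue {S Ah : Type*} [Fintype S] [DecidableEq S]
    (ph : S → Ah → S → ℝ) (Rh : S → Ah → S → ℝ) (γ : ℝ) (ν : S → Ah) (s : S) : ℝ :=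
  ∑' t : ℕ, γ ^ t *
    (((Matrix.of fun s₁ s₂ => ph s₁ (ν s₁) s₂) ^ t).mulVec
      (fun s₁ => ∑ s', ph s₁ (ν s₁) s' * Rh s₁ (ν s₁) s')) s

open Matrix

namespace Matrix

variable {n : Type*} [Fintype n] [DecidableEq n] {M : Matrix n n ℝ} {v : n → ℝ} {K : ℝ}

lemma mulVec_le_of_mem_rowStochastic (hM : M ∈ rowStochastic ℝ n) (hv : ∀ j, v j ≤ K)
    (i : n) : (M *ᵥ v) i ≤ K :=
  calc (M *ᵥ v) i = ∑ j, M i j * v j := rfl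
    _ ≤ ∑ j, M i j * K := sum_le_sum fun j _ => mul_le_mul_of_nonneg_left (hv j) (hM.1 i j)
    _ = K := by rw [← sum_mul, sum_row_of_mem_rowStochastic hM, one_mul]

lemma le_mulVec_of_mem_rowStochastic (hM : M ∈ rowStochastic ℝ n) (hv : ∀ j, K ≤ v j)
    (i : n) : K ≤ (M *ᵥ v) i :=
  calc K = ∑ j, M i j * K := by rw [← sum_mul, sum_row_of_mem_rowStochastic hM, one_mul]
    _ ≤ ∑ j, M i j * v j := sum_le_sum fun j _ => mul_le_mul_of_nonneg_left (hv j) (hM.1 i j)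
    _ = (M *ᵥ v) i := rfl

lemma abs_mulVec_le_norm_of_mem_rowStochastic (hM : M ∈ rowStochastic ℝ n) (v : n → ℝ)
    (i : n) : |(M *ᵥ v) i| ≤ ‖v‖ := by
  have hle : ∀ j, |v j| ≤ ‖v‖ := fun j => norm_le_pi_norm v j
  exact abs_le.2 ⟨le_mulVec_of_mem_rowStochastic hM (fun j => (abs_le.1 (hle j)).1) i,
    mulVec_le_of_mem_rowStochastic hM (fun j => (abs_le.1 (hle j)).2) i⟩

end Matrix

section DiscountedValue

variable {n : Type*} [Fintype n] [DecidableEq n] {M : Matrix n n ℝ} {v : n → ℝ} {K γ : ℝ}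

noncomputable def discountedValue (γ : ℝ) (M : Matrix n n ℝ) (v : n → ℝ) (i : n) : ℝ :=
  ∑' t : ℕ, γ ^ t * (M ^ t *ᵥ v) i

lemma summable_discounted_pow_mulVec (hM : M ∈ rowStochastic ℝ n) (hγ0 : 0 ≤ γ)
    (hγ1 : γ < 1) (v : n → ℝ) (i : n) : Summable fun t : ℕ => γ ^ t * (M ^ t *ᵥ v) i := by
  refine ((summable_geometric_of_lt_one hγ0 hγ1).mul_right ‖v‖).of_norm_bounded fun t => ?_
  rw [Real.norm_eq_abs, abs_mul, abs_of_nonneg (pow_nonneg hγ0 t)]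
  exact mul_le_mul_of_nonneg_left
    (abs_mulVec_le_norm_of_mem_rowStochastic (pow_mem hM t) v i) (pow_nonneg hγ0 t)

lemma discountedValue_neg (γ : ℝ) (M : Matrix n n ℝ) (v : n → ℝ) (i : n) :
    discountedValue γ M (-v) i = -discountedValue γ M v i := by
  simp only [discountedValue, mulVec_neg, Pi.neg_apply, mul_neg, tsum_neg]

lemma le_discountedValue (hM : M ∈ rowStochastic ℝ n) (hγ0 : 0 ≤ γ) (hγ1 : γ < 1)
    (hv : ∀ j, K ≤ v j) (i : n) : K / (1 - γ) ≤ discountedValue γ M v i := by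
  have hgeom := (hasSum_geometric_of_lt_one hγ0 hγ1).mul_left K
  rw [← div_eq_mul_inv] at hgeom
  refine hasSum_le (fun t => ?_) hgeom (summable_discounted_pow_mulVec hM hγ0 hγ1 v i).hasSum
  rw [mul_comm K]
  exact mul_le_mul_of_nonneg_left
    (le_mulVec_of_mem_rowStochastic (pow_mem hM t) hv i) (pow_nonneg hγ0 t)

lemma discountedValue_le (hM : M ∈ rowStochastic ℝ n) (hγ0 : 0 ≤ γ) (hγ1 : γ < 1)
    (hv : ∀ j, v j ≤ K) (i : n) : discountedValue γ M v i ≤ v i + γ * K / (1 - γ) := by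
  have hsum := summable_discounted_pow_mulVec hM hγ0 hγ1 v i
  have hgeom := (hasSum_geometric_of_lt_one hγ0 hγ1).mul_left (γ * K)
  rw [← div_eq_mul_inv] at hgeom
  have htail : ∑' t : ℕ, γ ^ (t + 1) * (M ^ (t + 1) *ᵥ v) i ≤ γ * K / (1 - γ) := by
    refine hasSum_le (fun t => ?_) ((summable_nat_add_iff 1).2 hsum).hasSum hgeom
    calc γ ^ (t + 1) * (M ^ (t + 1) *ᵥ v) i ≤ γ ^ (t + 1) * K :=
          mul_le_mul_of_nonneg_left
            (mulVec_le_of_mem_rowStochastic (pow_mem hM _) hv i) (pow_nonneg hγ0 _)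
      _ = γ * K * γ ^ t := by ring
  rw [discountedValue, hsum.tsum_eq_zero_add, pow_zero, one_mul, pow_zero, one_mulVec]
  linarith

end DiscountedValue

section MDP

variable {S Ah : Type*}

def policyMatrix (P : S → Ah → S → ℝ) (ν : S → Ah) : Matrix S S ℝ :=
  of fun s s' => P s (ν s) s'

variable [Fintype S] [DecidableEq S]

lemma policyMatrix_mem_rowStochastic {P : S → Ah → S → ℝ} (hP0 : ∀ s a s', 0 ≤ P s a s')
    (hP1 : ∀ s a, ∑ s', P s a s' = 1) (ν : S → Ah) :
    policyMatrix P ν ∈ rowStochastic ℝ S :=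
  mem_rowStochastic_iff_sum.2 ⟨fun s s' => hP0 s (ν s) s', fun s => hP1 s (ν s)⟩

lemma detValue_eq_discountedValue {P : S → Ah → S → ℝ} (hP1 : ∀ s a, ∑ s', P s a s' = 1)
    (r : S → Ah → ℝ) (γ : ℝ) (ν : S → Ah) (s : S) :
    detValue P (fun s a _ => r s a) γ ν s =
      discountedValue γ (policyMatrix P ν) (fun s => r s (ν s)) s := by
  simp only [detValue, ← sum_mul, hP1, one_mul]
  rfl

end MDP

section AdversaryMDP

variable {S A : Type*} [Fintype A]
  (p : S → A → S → ℝ) (R : S → A → S → ℝ) (π : S → A → ℝ)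
  (B : S → Finset S) (γ : ℝ)

def mergedTransition (s ah s' : S) : ℝ := ∑ a, π ah a * p s a s'

variable {p π} in
lemma mergedTransition_nonneg (hπ0 : ∀ s a, 0 ≤ π s a) (hp0 : ∀ s a s', 0 ≤ p s a s')
    (s ah s' : S) : 0 ≤ mergedTransition p π s ah s' :=
  sum_nonneg fun a _ => mul_nonneg (hπ0 ah a) (hp0 s a s')

variable [Fintype S]

noncomputable def expectedReward (s ah : S) : ℝ := ∑ a, π ah a * ∑ s', p s a s' * R s a s'

/-- Any value below `-(1 + γ) ‖expectedReward p R π‖ / (1 - γ)` works: then a single penalized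
step costs more than any compliant adversary can lose over the whole horizon. -/
noncomputable def penalty : ℝ := -(2 * ‖expectedReward p R π‖ + 1) / (1 - γ)

/-- The paper's `R̂` averaged over the next state, which leaves every value unchanged. -/
noncomputable def adversaryReward [DecidableEq S] (s ah : S) : ℝ :=
  if ah ∈ B s then -expectedReward p R π s ah else penalty p R π γ

variable {p R π B γ}

lemma sum_mergedTransition (hπ1 : ∀ s, ∑ a, π s a = 1) (hp1 : ∀ s a, ∑ s', p s a s' = 1)
    (s ah : S) : ∑ s', mergedTransition p π s ah s' = 1 := by
  simp only [mergedTransition, sum_comm (γ := S), ← mul_sum, hp1, mul_one, hπ1]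

lemma abs_expectedReward_le_norm (s ah : S) :
    |expectedReward p R π s ah| ≤ ‖expectedReward p R π‖ :=
  (norm_le_pi_norm (expectedReward p R π s) ah).trans (norm_le_pi_norm _ s)

variable [DecidableEq S]

lemma adversaryReward_le_norm (hγ1 : γ < 1) (s ah : S) :
    adversaryReward p R π B γ s ah ≤ ‖expectedReward p R π‖ := by
  unfold adversaryReward
  split_ifs
  · exact (neg_le_abs _).trans (abs_expectedReward_le_norm s ah)
  · refine (div_nonpos_of_nonpos_of_nonneg ?_ (sub_pos.2 hγ1).le).trans (norm_nonneg _)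
    linarith [norm_nonneg (expectedReward p R π)]

lemma advValue_eq_discountedValue (ν : S → S) (s : S) :
    advValue p R γ π ν s = discountedValue γ (policyMatrix (mergedTransition p π) ν)
      (fun s => expectedReward p R π s (ν s)) s :=
  rfl

lemma detValue_adversaryReward_eq_neg_advValue (hπ1 : ∀ s, ∑ a, π s a = 1)
    (hp1 : ∀ s a, ∑ s', p s a s' = 1) {ν : S → S} (hν : ∀ s, ν s ∈ B s) (s : S) :
    detValue (mergedTransition p π) (fun s ah _ => adversaryReward p R π B γ s ah) γ ν s =
      -advValue p R γ π ν s := by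
  rw [detValue_eq_discountedValue (sum_mergedTransition hπ1 hp1), advValue_eq_discountedValue,
    ← discountedValue_neg]
  congr 1
  ext s
  simp only [adversaryReward, if_pos (hν s), Pi.neg_apply]

lemma apply_mem_of_forall_detValue_le (hγ0 : 0 ≤ γ) (hγ1 : γ < 1) (hB : ∀ s, (B s).Nonempty)
    (hπ0 : ∀ s a, 0 ≤ π s a) (hπ1 : ∀ s, ∑ a, π s a = 1)
    (hp0 : ∀ s a s', 0 ≤ p s a s') (hp1 : ∀ s a, ∑ s', p s a s' = 1) {νstar : S → S}
    (hopt : ∀ ν s,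
      detValue (mergedTransition p π) (fun s ah _ => adversaryReward p R π B γ s ah) γ ν s ≤
        detValue (mergedTransition p π) (fun s ah _ => adversaryReward p R π B γ s ah) γ
          νstar s)
    (s : S) : νstar s ∈ B s := by
  by_contra hs
  choose νB hνB using hB
  have hM := policyMatrix_mem_rowStochastic (mergedTransition_nonneg hπ0 hp0)
    (sum_mergedTransition hπ1 hp1)
  simp only [detValue_eq_discountedValue (sum_mergedTransition hπ1 hp1)] at hopt
  have upper := discountedValue_le (hM νstar) hγ0 hγ1
    (v := fun s => adversaryReward p R π B γ s (νstar s))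
    (fun s => adversaryReward_le_norm hγ1 _ _) s
  have lower := le_discountedValue (hM νB) hγ0 hγ1
    (K := -‖expectedReward p R π‖) (v := fun s => adversaryReward p R π B γ s (νB s))
    (fun s => by
      rw [adversaryReward, if_pos (hνB s), neg_le_neg_iff]
      exact (le_abs_self _).trans (abs_expectedReward_le_norm _ _)) s
  have key := (lower.trans (hopt νB s)).trans upper
  rw [adversaryReward, if_neg hs, penalty, ← add_div,
    div_le_div_iff_of_pos_right (sub_pos.2 hγ1)] at key
  nlinarith [norm_nonneg (expectedReward p R π)]

end AdversaryMDP

/-- Equivalence lemma: for a finite SA-MDP and fixed policy π, there exists a regular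
MDP with action space Â = S such that any optimal deterministic policy ν* of that MDP
takes actions in B(s), and ν* is an optimal adversary for π in the SA-MDP. -/
theorem exists_adversary_mdp
    {S A : Type*} [Fintype S] [Fintype A] [DecidableEq S]
    (p : S → A → S → ℝ) (R : S → A → S → ℝ) (γ : ℝ)
    (hγ0 : 0 < γ) (hγ1 : γ < 1)
    (B : S → Finset S) (hB : ∀ s, (B s).Nonempty)
    (π : S → A → ℝ) (hπ0 : ∀ s a, 0 ≤ π s a) (hπ1 : ∀ s, ∑ a, π s a = 1)
    (hp0 : ∀ s a s', 0 ≤ p s a s') (hp1 : ∀ s a, ∑ s', p s a s' = 1) :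
    ∃ (ph : S → S → S → ℝ) (Rh : S → S → S → ℝ),
      (∀ s ah s', 0 ≤ ph s ah s') ∧ (∀ s ah, ∑ s', ph s ah s' = 1) ∧
      ∀ νstar : S → S,
        (∀ (ν : S → S) (s : S), detValue ph Rh γ ν s ≤ detValue ph Rh γ νstar s) →
        (∀ s, νstar s ∈ B s) ∧
        ∀ ν : S → S, (∀ s, ν s ∈ B s) →
          ∀ s, advValue p R γ π νstar s ≤ advValue p R γ π ν s := by
  refine ⟨mergedTransition p π, fun s ah _ => adversaryReward p R π B γ s ah,
    mergedTransition_nonneg hπ0 hp0, sum_mergedTransition hπ1 hp1, fun νstar hopt => ?_⟩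
  have hνstar := apply_mem_of_forall_detValue_le hγ0.le hγ1 hB hπ0 hπ1 hp0 hp1 hopt
  refine ⟨hνstar, fun ν hν s => ?_⟩
  have h := hopt ν s
  rw [detValue_adversaryReward_eq_neg_advValue hπ1 hp1 hν,
    detValue_adversaryReward_eq_neg_advValue hπ1 hp1 hνstar] at h
  exact neg_le_neg_iff.1 h
end
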